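/- For all a, b > 0 with a ≠ b, L/G < 1 + G/H - I/G, where G = √(ab), H = 2ab/(a+b), L = (a-b)/(log a - log b), and I = (1/e)·(a^a/b^b)^{1/(a-b)}. -/

import Mathlib

/-!
Write `a = exp (m + s)` and `b = exp (m - s)`. Then `L / G = sinh s / s`, `G / H = cosh s` and
`I / G = exp (s * coth s - 1)`, so the claim reads `exp (s * coth s - 1) < 1 + cosh s - sinh s / s`.
Both sides are even in `s`, so let `s > 0`. The difference of the logarithms of the two sides
tends to `0` as `s → 0⁺` and is strictly increasing: its derivative has the sign of
`sinh³ s - s² sinh s cosh s - 2 s² sinh s + s³ cosh s + s³`, whose Taylor series has nonnegative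
coefficients, the first nonzero one at `s ^ 9`.
-/

open Real Filter Topology Set
open scoped Nat

lemma sinh_lt_mul_cosh {s : ℝ} (hs : 0 < s) : sinh s < s * cosh s := by
  have hcosh : HasSum (fun k : ℕ ↦ s ^ (2 * k + 1) / (2 * k)!) (s * cosh s) := by
    simpa only [pow_succ', mul_div_assoc] using (hasSum_cosh s).mul_left s
  refine hasSum_lt (i := 1) (fun k ↦ ?_) ?_ (hasSum_sinh s) hcosh
  · gcongr
    omega
  · norm_num [Nat.factorial]
    linarith [pow_pos hs 3]

lemma one_add_cosh_sub_sinh_div_pos {s : ℝ} (hs : 0 < s) : 0 < 1 + cosh s - sinh s / s := by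
  have : sinh s / s < cosh s := by
    rw [div_lt_iff₀ hs, mul_comm]
    exact sinh_lt_mul_cosh hs
  linarith [cosh_pos s]

lemma two_pow_mul_add_lt_three_pow (k : ℕ) :
    (2 ^ (2 * k + 8) + 8) * (2 * k + 9) * (2 * k + 8) + 3 < 3 ^ (2 * k + 9) := by
  induction k with
  | zero => norm_num
  | succ k ih =>
    rw [show 2 * (k + 1) + 8 = 2 * k + 8 + 2 by ring, show 2 * (k + 1) + 9 = 2 * k + 9 + 2 by ring,
      pow_add 2 (2 * k + 8) 2, pow_add 3 (2 * k + 9) 2]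
    have hpoly : (2 * k + 9 + 2) * (2 * k + 8 + 2) ≤ 2 * ((2 * k + 9) * (2 * k + 8)) := by
      nlinarith
    generalize 2 ^ (2 * k + 8) = x at *
    generalize 3 ^ (2 * k + 9) = y at *
    nlinarith [Nat.mul_le_mul_left (x + 8) hpoly]

noncomputable def gapNum (s : ℝ) : ℝ :=
  sinh s ^ 3 - s ^ 2 * sinh s * cosh s - 2 * s ^ 2 * sinh s + s ^ 3 * cosh s + s ^ 3

/-- `4 * gapNum s - 4 * s ^ 3 = sinh (3 s) - 3 sinh s - 2 s² sinh (2 s) - 8 s² sinh s + 4 s³ cosh s`,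
and `gapNumCoeff k` is `(2k+3)!` times the coefficient of `s ^ (2k+3)` in this series. -/
def gapNumCoeff (k : ℕ) : ℝ :=
  3 ^ (2 * k + 3) - 3 - (2 ^ (2 * k + 2) + 8) * (2 * k + 3) * (2 * k + 2) +
    4 * (2 * k + 3) * (2 * k + 2) * (2 * k + 1)

lemma hasSum_gapNumCoeff (s : ℝ) :
    HasSum (fun k : ℕ ↦ gapNumCoeff k * s ^ (2 * k + 3) / (2 * k + 3)!)
      (4 * gapNum s - 4 * s ^ 3) := by
  have h3 := (hasSum_nat_add_iff' 1).mpr (hasSum_sinh (3 * s))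
  have h1 := (hasSum_nat_add_iff' 1).mpr (hasSum_sinh s)
  simp only [Finset.range_one, Finset.sum_singleton, mul_zero, zero_add, pow_one,
    Nat.factorial_one, Nat.cast_one, div_one] at h3 h1
  have H := (((h3.sub (h1.mul_left 3)).sub ((hasSum_sinh (2 * s)).mul_left (2 * s ^ 2))).sub
    ((hasSum_sinh s).mul_left (8 * s ^ 2))).add ((hasSum_cosh s).mul_left (4 * s ^ 3))
  rw [show 4 * gapNum s - 4 * s ^ 3 = sinh (3 * s) - 3 * s - 3 * (sinh s - s) -
      2 * s ^ 2 * sinh (2 * s) - 8 * s ^ 2 * sinh s + 4 * s ^ 3 * cosh s by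
    rw [sinh_three_mul, sinh_two_mul, gapNum]; ring]
  refine H.congr_fun fun k ↦ ?_
  have e1 : (2 * k + 1)! = (2 * k + 1) * (2 * k)! := Nat.factorial_succ _
  have e3 : (2 * (k + 1) + 1)! = (2 * k + 3) * (2 * k + 2) * (2 * k + 1)! := by
    rw [show 2 * (k + 1) + 1 = 2 * k + 1 + 1 + 1 by ring, Nat.factorial_succ, Nat.factorial_succ]
    ring
  rw [show 2 * k + 3 = 2 * (k + 1) + 1 by ring, e3, e1]
  push_cast
  unfold gapNumCoeff
  field_simp
  ring

lemma gapNumCoeff_pos (k : ℕ) : 0 < gapNumCoeff (k + 3) := by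
  have h : ((2 ^ (2 * k + 8) + 8) * (2 * k + 9) * (2 * k + 8) + 3 : ℝ) < 3 ^ (2 * k + 9) := by
    exact_mod_cast two_pow_mul_add_lt_three_pow k
  have hcubic : (0 : ℝ) ≤ 4 * (2 * k + 9) * (2 * k + 8) * (2 * k + 7) := by positivity
  unfold gapNumCoeff
  rw [show 2 * (k + 3) + 3 = 2 * k + 9 by ring, show 2 * (k + 3) + 2 = 2 * k + 8 by ring]
  push_cast
  linarith

lemma gapNumCoeff_nonneg (k : ℕ) : 0 ≤ gapNumCoeff (k + 1) := by
  rcases k with _ | _ | k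
  · norm_num [gapNumCoeff]
  · norm_num [gapNumCoeff]
  · exact (gapNumCoeff_pos k).le

lemma gapNum_pos {s : ℝ} (hs : 0 < s) : 0 < gapNum s := by
  have h := (hasSum_nat_add_iff' 1).mpr (hasSum_gapNumCoeff s)
  have h0 : gapNumCoeff 0 * s ^ (2 * 0 + 3) / (2 * 0 + 3)! = -4 * s ^ 3 := by
    norm_num [gapNumCoeff]
    ring
  simp only [Finset.range_one, Finset.sum_singleton, h0] at h
  have := hasSum_lt (i := 2) (fun k ↦ ?_) ?_ hasSum_zero h
  · linarith
  · exact div_nonneg (mul_nonneg (gapNumCoeff_nonneg k) (pow_nonneg hs.le _)) (by positivity)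
  · exact div_pos (mul_pos (gapNumCoeff_pos 0) (pow_pos hs _)) (by positivity)

lemma tendsto_sinh_div_self : Tendsto (fun s ↦ sinh s / s) (𝓝[≠] 0) (𝓝 1) := by
  simpa [slope_fun_def_field] using hasDerivAt_iff_tendsto_slope.mp (hasDerivAt_sinh 0)

noncomputable def logGap (s : ℝ) : ℝ :=
  log (1 + cosh s - sinh s / s) - (s * cosh s / sinh s - 1)

lemma hasDerivAt_logGap {s : ℝ} (hs : 0 < s) :
    HasDerivAt logGap (gapNum s / (s ^ 2 * (1 + cosh s - sinh s / s) * sinh s ^ 2)) s := by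
  have hsinh : 0 < sinh s := sinh_pos_iff.mpr hs
  have hnum : 0 < s * (1 + cosh s) - sinh s := by linarith [sinh_lt_mul_cosh hs]
  have hquot := ((hasDerivAt_cosh s).const_add 1).sub
    ((hasDerivAt_sinh s).div (hasDerivAt_id s) hs.ne')
  have hcoth := ((hasDerivAt_id s).mul (hasDerivAt_cosh s)).div (hasDerivAt_sinh s) hsinh.ne'
  refine ((hquot.log (one_add_cosh_sub_sinh_div_pos hs).ne').sub
    (hcoth.sub_const 1)).congr_deriv ?_
  simp only [id, Pi.sub_apply, Pi.div_apply, Pi.mul_apply, gapNum]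
  field_simp [hnum.ne']
  linear_combination (s ^ 3 * (1 + cosh s) - 2 * s ^ 2 * sinh s) * cosh_sq s

lemma tendsto_logGap : Tendsto logGap (𝓝[>] 0) (𝓝 0) := by
  have hq := tendsto_sinh_div_self.mono_left (nhdsWithin_mono _ fun t (ht : 0 < t) ↦ ht.ne')
  have hc : Tendsto cosh (𝓝[>] 0) (𝓝 1) := by
    simpa using (continuous_cosh.tendsto 0).mono_left nhdsWithin_le_nhds
  have h := (((hc.const_add 1).sub hq).log (by norm_num)).sub ((hc.div hq one_ne_zero).sub_const 1)
  norm_num at h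
  convert h using 2 with t
  rw [logGap, div_div_eq_mul_div, mul_comm]

lemma logGap_pos {s : ℝ} (hs : 0 < s) : 0 < logGap s := by
  have hmono : StrictMonoOn logGap (Ioi 0) := by
    refine strictMonoOn_of_deriv_pos (convex_Ioi 0)
      (fun t ht ↦ (hasDerivAt_logGap ht).continuousAt.continuousWithinAt) fun t ht ↦ ?_
    rw [interior_Ioi] at ht
    rw [(hasDerivAt_logGap ht).deriv]
    exact div_pos (gapNum_pos ht) (mul_pos (mul_pos (pow_pos ht 2)
      (one_add_cosh_sub_sinh_div_pos ht)) (pow_pos (sinh_pos_iff.mpr ht) 2))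
  have hhalf : 0 ≤ logGap (s / 2) := by
    refine le_of_tendsto tendsto_logGap ?_
    filter_upwards [Ioo_mem_nhdsGT (half_pos hs)] with t ht
    exact (hmono ht.1 (half_pos hs) ht.2).le
  linarith [hmono (half_pos hs) hs (half_lt_self hs)]

lemma sinh_div_self_add_exp_lt {s : ℝ} (hs : s ≠ 0) :
    sinh s / s + exp (s * cosh s / sinh s - 1) < 1 + cosh s := by
  wlog hpos : 0 < s generalizing s
  · simpa [neg_div_neg_eq] using this (neg_ne_zero.mpr hs) (by grind)
  have hlog : s * cosh s / sinh s - 1 < log (1 + cosh s - sinh s / s) := by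
    have := logGap_pos hpos
    rw [logGap] at this
    linarith
  linarith [exp_log (one_add_cosh_sub_sinh_div_pos hpos) ▸ exp_lt_exp.mpr hlog]

noncomputable def logMean (a b : ℝ) : ℝ := (a - b) / (log a - log b)

noncomputable def harmMean (a b : ℝ) : ℝ := 2 * a * b / (a + b)

noncomputable def identricMean (a b : ℝ) : ℝ := 1 / exp 1 * (a ^ a / b ^ b) ^ (1 / (a - b))

section ExpParametrization

variable (m s : ℝ)

lemma sqrt_exp_add_mul_exp_sub : √(exp (m + s) * exp (m - s)) = exp m := by
  rw [← exp_add, show m + s + (m - s) = m + m by ring, exp_add, sqrt_mul_self (exp_pos m).le]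

lemma exp_add_sub_exp_sub : exp (m + s) - exp (m - s) = 2 * exp m * sinh s := by
  rw [sinh_eq, exp_add, exp_sub, exp_neg]
  ring

lemma exp_add_add_exp_sub : exp (m + s) + exp (m - s) = 2 * exp m * cosh s := by
  rw [cosh_eq, exp_add, exp_sub, exp_neg]
  ring

lemma logMean_exp : logMean (exp (m + s)) (exp (m - s)) = exp m * (sinh s / s) := by
  rw [logMean, log_exp, log_exp, exp_add_sub_exp_sub, show m + s - (m - s) = 2 * s by ring]
  ring

lemma harmMean_exp : harmMean (exp (m + s)) (exp (m - s)) = exp m / cosh s := by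
  rw [harmMean, mul_assoc, ← exp_add, exp_add_add_exp_sub, show m + s + (m - s) = m + m by ring,
    exp_add]
  field_simp [(cosh_pos s).ne']

lemma identricMean_exp (hs : s ≠ 0) :
    identricMean (exp (m + s)) (exp (m - s)) = exp m * exp (s * cosh s / sinh s - 1) := by
  rw [identricMean, ← exp_mul, ← exp_mul, ← exp_sub, ← exp_mul, exp_add_sub_exp_sub, one_div,
    ← exp_neg, ← exp_add, ← exp_add]
  congr 1
  have hnum :
      (m + s) * exp (m + s) - (m - s) * exp (m - s) = 2 * exp m * (m * sinh s + s * cosh s) := by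
    linear_combination m * exp_add_sub_exp_sub m s + s * exp_add_add_exp_sub m s
  rw [hnum]
  field_simp [(exp_pos m).ne']
  ring

end ExpParametrization

theorem sandor_coro_LG (a b : ℝ) (ha : 0 < a) (hb : 0 < b) (hab : a ≠ b) :
    ((a - b) / (Real.log a - Real.log b)) / Real.sqrt (a * b) <
      1 + Real.sqrt (a * b) / (2 * a * b / (a + b)) -
        ((1 / exp 1) * (a ^ a / b ^ b) ^ (1 / (a - b))) / Real.sqrt (a * b) := by
  obtain ⟨m, s, rfl, rfl⟩ : ∃ m s, a = exp (m + s) ∧ b = exp (m - s) :=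
    ⟨(log a + log b) / 2, (log a - log b) / 2, by ring_nf; exact (exp_log ha).symm,
      by ring_nf; exact (exp_log hb).symm⟩
  have hs : s ≠ 0 := by
    rintro rfl
    simp at hab
  change logMean _ _ / _ < 1 + _ / harmMean _ _ - identricMean _ _ / _
  have hexp : exp m ≠ 0 := (exp_pos m).ne'
  rw [sqrt_exp_add_mul_exp_sub, logMean_exp, harmMean_exp, identricMean_exp m s hs,
    mul_div_cancel_left₀ _ hexp, mul_div_cancel_left₀ _ hexp, div_div_cancel₀ hexp]
  linarith [sinh_div_self_add_exp_lt hs]
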